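/- arXiv:2103.04516 — 3 statements merged into one kernel-verified Lean document; each statement's English description precedes it below -/
import Mathlib

section
/- For any state s with finitely many agents, repeatedly applying the wait-action neighbor generation (which raises all minimum-timestamp agents to the second-smallest timestamp) terminates after finitely many steps in a synchronized state, i.e., a state s' in which all agents have equal timestamps, with the same joint vertex as s and with common timestamp equal to the maximum timestamp t_max(s) of s. -/
/-- Minimum timestamp of a state. -/
noncomputable def tmin {I : Type*} [Fintype I] [Nonempty I] (t : I → ℝ) : ℝ :=
  Finset.univ.inf' Finset.univ_nonempty t

/-- Maximum timestamp of a state. -/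
noncomputable def tmax {I : Type*} [Fintype I] [Nonempty I] (t : I → ℝ) : ℝ :=
  Finset.univ.sup' Finset.univ_nonempty t

/-- Second-smallest distinct timestamp (meaningful when not all timestamps are equal). -/
noncomputable def tmin2 {I : Type*} [Fintype I] [Nonempty I] (t : I → ℝ) : ℝ :=
  sInf {x : ℝ | (∃ j, x = t j) ∧ tmin t < x}

/-- The wait-action update: every agent achieving the minimum timestamp has its
timestamp raised to the second-smallest distinct timestamp; it is the identity on
synchronized states (all timestamps equal). Vertices are untouched. -/
noncomputable def waitUpdate {I : Type*} [Fintype I] [Nonempty I] (t : I → ℝ) : I → ℝ :=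
  fun i => if t i = tmin t ∧ ¬(∀ j, t j = tmin t) then tmin2 t else t i

/-- Wait update on full states (joint vertex, timestamps): vertices unchanged. -/
noncomputable def waitState {I V : Type*} [Fintype I] [Nonempty I]
    (s : (I → V) × (I → ℝ)) : (I → V) × (I → ℝ) :=
  (s.1, waitUpdate s.2)

section Aux

variable {I : Type*} [Fintype I] [Nonempty I]

lemma tmin_le (t : I → ℝ) (i : I) : tmin t ≤ t i :=
  Finset.inf'_le _ (Finset.mem_univ i)

lemma le_tmax (t : I → ℝ) (i : I) : t i ≤ tmax t :=
  Finset.le_sup' _ (Finset.mem_univ i)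

lemma tmin2_spec (t : I → ℝ) (h : ¬ ∀ j, t j = tmin t) :
    ((∃ j, tmin2 t = t j) ∧ tmin t < tmin2 t) ∧
      ∀ x, (∃ j, x = t j) → tmin t < x → tmin2 t ≤ x := by
  push_neg at h
  obtain ⟨j0, hj0⟩ := h
  have hne : ({x : ℝ | (∃ j, x = t j) ∧ tmin t < x}).Nonempty :=
    ⟨t j0, ⟨j0, rfl⟩, lt_of_le_of_ne (tmin_le t j0) (Ne.symm hj0)⟩
  have hfin : ({x : ℝ | (∃ j, x = t j) ∧ tmin t < x}).Finite := by
    apply (Set.finite_range t).subset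
    rintro x ⟨⟨j, rfl⟩, -⟩; exact ⟨j, rfl⟩
  refine ⟨hne.csInf_mem hfin, fun x hx hlt => csInf_le hfin.bddBelow ⟨hx, hlt⟩⟩

lemma key (n : ℕ) : ∀ (t : I → ℝ), (Finset.univ.image t).card ≤ n →
    ∃ k : ℕ, ∀ i, (waitUpdate^[k] t) i = tmax t := by
  induction n with
  | zero =>
    intro t ht
    have := Finset.card_pos.mpr (Finset.Nonempty.image Finset.univ_nonempty t)
    omega
  | succ n ih =>
    intro t ht
    by_cases hall : ∀ j, t j = tmin t
    · refine ⟨0, fun i => ?_⟩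
      have : tmax t ≤ tmin t := Finset.sup'_le _ _ fun j _ => (hall j).le
      simp only [Function.iterate_zero, id]
      exact (hall i).trans (le_antisymm this (le_trans (tmin_le t i) (le_tmax t i))).symm
    · obtain ⟨⟨⟨j1, hj1⟩, hlt⟩, hmin2le⟩ := tmin2_spec t hall
      -- tmax preserved
      obtain ⟨i0, -, hi0⟩ := Finset.exists_mem_eq_sup' Finset.univ_nonempty t
      have hi0' : tmax t = t i0 := hi0
      have htlt : tmin t < tmax t := by
        push_neg at hall
        obtain ⟨j0, hj0⟩ := hall
        exact lt_of_lt_of_le (lt_of_le_of_ne (tmin_le t j0) (Ne.symm hj0)) (le_tmax t j0)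
      have hmax : tmax (waitUpdate t) = tmax t := by
        apply le_antisymm
        · apply Finset.sup'_le
          intro i _
          unfold waitUpdate
          split
          · exact (hmin2le _ ⟨j1, hj1⟩ hlt).trans (hj1 ▸ le_tmax t j1)
          · exact le_tmax t i
        · have : waitUpdate t i0 = t i0 := by
            unfold waitUpdate
            rw [if_neg]
            rintro ⟨h1, -⟩
            exact absurd (hi0'.trans h1) (ne_of_gt htlt)
          calc tmax t = waitUpdate t i0 := by rw [this, hi0']
            _ ≤ tmax (waitUpdate t) := le_tmax _ i0
      -- image shrinks
      have hsub : Finset.univ.image (waitUpdate t) ⊆ (Finset.univ.image t).erase (tmin t) := by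
        intro x hx
        simp only [Finset.mem_image, Finset.mem_univ, true_and] at hx
        obtain ⟨i, hi⟩ := hx
        rw [Finset.mem_erase]
        unfold waitUpdate at hi
        split at hi
        · subst hi
          exact ⟨ne_of_gt hlt, Finset.mem_image.mpr ⟨j1, Finset.mem_univ j1, hj1.symm⟩⟩
        · rename_i hc
          push_neg at hc
          subst hi
          exact ⟨fun h => hall (hc h), Finset.mem_image.mpr ⟨i, Finset.mem_univ i, rfl⟩⟩
      have hcard : (Finset.univ.image (waitUpdate t)).card ≤ n := by
        have hmem : tmin t ∈ Finset.univ.image t := by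
          obtain ⟨i1, -, hi1⟩ := Finset.exists_mem_eq_inf' Finset.univ_nonempty t
          exact Finset.mem_image.mpr ⟨i1, Finset.mem_univ i1, hi1.symm⟩
        have := Finset.card_le_card hsub
        have h2 := Finset.card_erase_of_mem hmem
        omega
      obtain ⟨k, hk⟩ := ih (waitUpdate t) hcard
      exact ⟨k + 1, fun i => by
        rw [Function.iterate_succ_apply, hk i, hmax]⟩

end Aux

lemma waitState_iterate {I V : Type*} [Fintype I] [Nonempty I]
    (s : (I → V) × (I → ℝ)) (k : ℕ) :
    waitState^[k] s = (s.1, waitUpdate^[k] s.2) := by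
  induction k with
  | zero => rfl
  | succ k ih => rw [Function.iterate_succ_apply', ih, Function.iterate_succ_apply']; rfl

/-- Repeatedly applying the wait-action neighbor generation terminates after
finitely many steps in a synchronized state with the same joint vertex as `s` and with
common timestamp equal to `tmax` of `s`. -/
theorem wait_iteration_synchronizes {I V : Type*} [Fintype I] [Nonempty I]
    (s : (I → V) × (I → ℝ)) :
    ∃ k : ℕ, (waitState^[k] s).1 = s.1 ∧ ∀ i, (waitState^[k] s).2 i = tmax s.2 := by
  obtain ⟨k, hk⟩ := key (Finset.univ.image s.2).card s.2 le_rfl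
  exact ⟨k, by rw [waitState_iterate], by rw [waitState_iterate]; exact hk⟩
end

section
/- For a state s and a neighbor s' generated by GetNgh, there is no agent timestamp in the open interval (t_min(s), t_min(s')): every timestamp of every agent in s and in s' lies outside (t_min(s), t_min(s')). -/
/-- For a state `t` and a neighbor `t'` generated by `GetNgh` (agents at
the minimum timestamp advance either by a move duration at least `dmin > 0` or by
waiting exactly until the second-smallest timestamp; other agents are unchanged), no
agent timestamp of `t` or of `t'` lies in the open interval `(tmin t, tmin t')`. -/
theorem no_timestamp_in_open_interval {I : Type*} [Fintype I] [Nonempty I]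
    (t t' : I → ℝ) (dmin : ℝ) (hdmin : 0 < dmin)
    (hkeep : ∀ i, t i ≠ tmin t → t' i = t i)
    (hadv : ∀ i, t i = tmin t →
      (t i + dmin ≤ t' i ∨ t' i = tmin2 t)) :
    ∀ i, t i ∉ Set.Ioo (tmin t) (tmin t') ∧ t' i ∉ Set.Ioo (tmin t) (tmin t') := by
  intro i
  have hmin' : ∀ j, tmin t' ≤ t' j := fun j => Finset.inf'_le _ (Finset.mem_univ j)
  constructor
  · intro ⟨h1, h2⟩
    have hne : t i ≠ tmin t := ne_of_gt h1
    have := hkeep i hne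
    exact absurd (hmin' i) (by rw [this]; exact not_le.mpr h2)
  · intro ⟨h1, h2⟩
    exact absurd (hmin' i) (not_le.mpr h2)
end

section
/- If the joint graph is finite and, from every generated state, the expansion procedure eventually produces a synchronized state at the same joint vertex whose expansion generates states at all adjacent joint vertices, then the set of joint vertices reachable by the search equals the set of joint vertices reachable from the start vertex in the joint graph. -/
/-- Let `𝒱` be the (finite) vertex set of the joint graph with adjacency
`Adj` and start vertex `v₀`. The search generates a sequence of states `gen : ℕ → S`,
each labeled by a joint vertex `vtx`, with `gen 0` at `v₀`, and every later generated
state obtained by expanding some earlier generated state at an adjacent joint vertex.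
Assume (1) for every generated state there is a generated synchronized state at the
same joint vertex, and (2) expanding a synchronized state at `v` generates a state at
every joint vertex adjacent to `v`. Then the set of joint vertices reachable by the
search equals the set of joint vertices reachable from `v₀` in the joint graph
(reflexive-transitive closure of adjacency). -/
theorem search_covers_reachable_vertices
    {𝒱 S : Type*} [Fintype 𝒱] (Adj : 𝒱 → 𝒱 → Prop) (v₀ : 𝒱)
    (vtx : S → 𝒱) (Sync : S → Prop) (gen : ℕ → S)
    (hstart : vtx (gen 0) = v₀)
    (hparent : ∀ n : ℕ, 0 < n → ∃ m < n, Adj (vtx (gen m)) (vtx (gen n)))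
    (hsync : ∀ n : ℕ, ∃ m : ℕ, vtx (gen m) = vtx (gen n) ∧ Sync (gen m))
    (hexpand : ∀ n : ℕ, Sync (gen n) → ∀ u : 𝒱, Adj (vtx (gen n)) u →
      ∃ m : ℕ, vtx (gen m) = u) :
    {v : 𝒱 | ∃ n, vtx (gen n) = v} = {v : 𝒱 | Relation.ReflTransGen Adj v₀ v} := by
  ext v
  simp only [Set.mem_setOf_eq]
  constructor
  · rintro ⟨n, rfl⟩
    induction n using Nat.strong_induction_on with
    | _ n ih =>
      rcases Nat.eq_zero_or_pos n with rfl | hpos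
      · rw [hstart]
      · obtain ⟨m, hm, hadj⟩ := hparent n hpos
        exact (ih m hm).tail hadj
  · intro h
    induction h with
    | refl => exact ⟨0, hstart⟩
    | tail _ hadj ih =>
      obtain ⟨n, hn⟩ := ih
      obtain ⟨m, hmv, hms⟩ := hsync n
      obtain ⟨k, hk⟩ := hexpand m hms _ (by rw [hmv, hn]; exact hadj)
      exact ⟨k, hk⟩
end
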